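/- arXiv:1704.00604 — 2 statements merged into one kernel-verified Lean document; each statement's English description precedes it below -/
import Mathlib

section
/- For every a > 0 and every (u,v) ∈ ℝ²: p H(x,u,v) = u H_u(x,u,v) + v H_v(x,u,v) for all x ∈ Λ, and 2 H(x,u,v) ≤ u H_u(x,u,v) + v H_v(x,u,v) for all x ∈ ℝ^N ∖ Λ. -/
open MeasureTheory Real Set Filter

noncomputable section

abbrev Euc (N : ℕ) := EuclideanSpace ℝ (Fin N)

/-- Partial derivative of a two-variable real function in the first variable. -/
def pdU (f : ℝ → ℝ → ℝ) (u v : ℝ) : ℝ := deriv (fun t => f t v) u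

/-- Partial derivative of a two-variable real function in the second variable. -/
def pdV (f : ℝ → ℝ → ℝ) (u v : ℝ) : ℝ := deriv (fun t => f u t) v

/-- Integrand of the Gagliardo seminorm. -/
def gagKer (N : ℕ) (s : ℝ) (u : Euc N → ℝ) (z : Euc N × Euc N) : ℝ :=
  (u z.1 - u z.2) ^ 2 / ‖z.1 - z.2‖ ^ ((N : ℝ) + 2 * s)

/-- Squared Gagliardo seminorm `[u]²`. -/
def gagSq (N : ℕ) (s : ℝ) (u : Euc N → ℝ) : ℝ := ∫ z, gagKer N s u z

/-- Membership in the fractional Sobolev space `H^s(ℝ^N)`. -/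
def MemHs (N : ℕ) (s : ℝ) (u : Euc N → ℝ) : Prop :=
  MemLp u 2 (volume : Measure (Euc N)) ∧ Integrable (gagKer N s u)

/-- The nonlinearity `Q` together with assumptions (Q1)-(Q6); `Q` is `C²` on the closed
first quadrant and extended by `0` outside of it.  Its partial derivatives are `pdU Q`,
`pdV Q`. -/
structure QSetup (p : ℝ) : Type where
  Q : ℝ → ℝ → ℝ
  smooth : ContDiffOn ℝ 2 (fun z : ℝ × ℝ => Q z.1 z.2) (Ici 0 ×ˢ Ici 0)
  ext_zero : ∀ u v : ℝ, u ≤ 0 ∨ v ≤ 0 → Q u v = 0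
  q1 : ∀ t : ℝ, 0 < t → ∀ u v : ℝ, 0 ≤ u → 0 ≤ v → Q (t * u) (t * v) = t ^ p * Q u v
  q2 : ∃ C : ℝ, 0 < C ∧ ∀ u v : ℝ, 0 ≤ u → 0 ≤ v →
        |pdU Q u v| + |pdV Q u v| ≤ C * (u ^ (p - 1) + v ^ (p - 1))
  q3 : pdU Q 0 1 = 0 ∧ pdV Q 1 0 = 0
  q4 : pdU Q 1 0 = 0 ∧ pdV Q 0 1 = 0
  q5 : ∀ u v : ℝ, 0 < u → 0 < v → 0 < Q u v
  q6 : ∀ u v : ℝ, 0 ≤ u → 0 ≤ v → 0 ≤ pdU Q u v ∧ 0 ≤ pdV Q u v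

/-- The potentials `V`, `W`, the set `Λ`, the point `x₀` and `ρ₀`, with (H1)-(H3). -/
structure PotSetup (N : ℕ) : Type where
  V : Euc N → ℝ
  W : Euc N → ℝ
  Λ : Set (Euc N)
  x₀ : Euc N
  ρ₀ : ℝ
  contV : Continuous V
  contW : Continuous W
  openΛ : IsOpen Λ
  bddΛ : Bornology.IsBounded Λ
  x₀mem : x₀ ∈ Λ
  ρ₀pos : 0 < ρ₀
  h1 : ∀ x ∈ frontier Λ, ρ₀ ≤ V x ∧ ρ₀ ≤ W x
  h2 : V x₀ < ρ₀ ∧ W x₀ < ρ₀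
  h3 : (∀ x, V x₀ ≤ V x) ∧ (∀ x, W x₀ ≤ W x) ∧ 0 < V x₀ ∧ 0 < W x₀

/-- `‖(u,v)‖²_ξ` for the autonomous problem with frozen potentials `V(ξ)`, `W(ξ)`. -/
def normSqXi {N : ℕ} (s : ℝ) (P : PotSetup N) (ξ : Euc N) (u v : Euc N → ℝ) : ℝ :=
  gagSq N s u + gagSq N s v + ∫ x, (P.V ξ * u x ^ 2 + P.W ξ * v x ^ 2)

/-- The autonomous energy functional `J_ξ`. -/
def Jxi {N : ℕ} (s : ℝ) {p : ℝ} (QS : QSetup p) (P : PotSetup N) (ξ : Euc N)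
    (u v : Euc N → ℝ) : ℝ :=
  (1 / 2) * normSqXi s P ξ u v - ∫ x, QS.Q (u x) (v x)

/-- The Nehari manifold `N_ξ` of the autonomous functional `J_ξ`. -/
def NehariXi {N : ℕ} (s : ℝ) {p : ℝ} (QS : QSetup p) (P : PotSetup N) (ξ : Euc N) :
    Set ((Euc N → ℝ) × (Euc N → ℝ)) :=
  {w | MemHs N s w.1 ∧ MemHs N s w.2 ∧ w ≠ (0, 0) ∧
    normSqXi s P ξ w.1 w.2 =
      ∫ x, (w.1 x * pdU QS.Q (w.1 x) (w.2 x) + w.2 x * pdV QS.Q (w.1 x) (w.2 x))}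

/-- `C(ξ) = inf_{(u,v) ∈ N_ξ} J_ξ(u,v)`. -/
def Cmin {N : ℕ} (s : ℝ) {p : ℝ} (QS : QSetup p) (P : PotSetup N) (ξ : Euc N) : ℝ :=
  sInf ((fun w : (Euc N → ℝ) × (Euc N → ℝ) => Jxi s QS P ξ w.1 w.2) '' NehariXi s QS P ξ)

/-- The cut-off function `η` used in the penalization, for a given `a > 0`. -/
structure EtaSetup (a cη : ℝ) : Type where
  η : ℝ → ℝ
  smooth : ContDiff ℝ 2 η
  anti : Antitone η
  mem01 : ∀ t, η t ∈ Icc (0 : ℝ) 1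
  eq_one : ∀ t, t ≤ a → η t = 1
  eq_zero : ∀ t, 5 * a ≤ t → η t = 0
  bd1 : ∀ t, |deriv η t| ≤ cη / a
  bd2 : ∀ t, |deriv (deriv η) t| ≤ cη / a ^ 2

/-- `A = max { Q(u,v)/(u²+v²) : a ≤ √(u²+v²) ≤ 5a }`. -/
def Aconst {p : ℝ} (QS : QSetup p) (a : ℝ) : ℝ :=
  sSup ((fun z : ℝ × ℝ => QS.Q z.1 z.2 / (z.1 ^ 2 + z.2 ^ 2)) ''
    {z : ℝ × ℝ | a ≤ Real.sqrt (z.1 ^ 2 + z.2 ^ 2) ∧ Real.sqrt (z.1 ^ 2 + z.2 ^ 2) ≤ 5 * a})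

/-- The penalized nonlinearity `Q̂`. -/
def Qhat {p : ℝ} (QS : QSetup p) (η : ℝ → ℝ) (A u v : ℝ) : ℝ :=
  η (Real.sqrt (u ^ 2 + v ^ 2)) * QS.Q u v +
    (1 - η (Real.sqrt (u ^ 2 + v ^ 2))) * (A * (u ^ 2 + v ^ 2))

/-- The penalized function `H(x,u,v) = χ_Λ(x) Q(u,v) + (1-χ_Λ(x)) Q̂(u,v)`. -/
def Hpen {N : ℕ} {p : ℝ} (QS : QSetup p) (η : ℝ → ℝ) (A : ℝ) (Λ : Set (Euc N))
    (x : Euc N) (u v : ℝ) : ℝ :=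
  Λ.indicator (fun _ => (1 : ℝ)) x * QS.Q u v +
    (1 - Λ.indicator (fun _ => (1 : ℝ)) x) * Qhat QS η A u v

/-- `H_u`. -/
def HpenU {N : ℕ} {p : ℝ} (QS : QSetup p) (η : ℝ → ℝ) (A : ℝ) (Λ : Set (Euc N))
    (x : Euc N) (u v : ℝ) : ℝ := pdU (Hpen QS η A Λ x) u v

/-- `H_v`. -/
def HpenV {N : ℕ} {p : ℝ} (QS : QSetup p) (η : ℝ → ℝ) (A : ℝ) (Λ : Set (Euc N))
    (x : Euc N) (u v : ℝ) : ℝ := pdV (Hpen QS η A Λ x) u v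

/-- `H_uu`. -/
def HpenUU {N : ℕ} {p : ℝ} (QS : QSetup p) (η : ℝ → ℝ) (A : ℝ) (Λ : Set (Euc N))
    (x : Euc N) (u v : ℝ) : ℝ := pdU (HpenU QS η A Λ x) u v

/-- `H_uv`. -/
def HpenUV {N : ℕ} {p : ℝ} (QS : QSetup p) (η : ℝ → ℝ) (A : ℝ) (Λ : Set (Euc N))
    (x : Euc N) (u v : ℝ) : ℝ := pdV (HpenU QS η A Λ x) u v

/-- `H_vv`. -/
def HpenVV {N : ℕ} {p : ℝ} (QS : QSetup p) (η : ℝ → ℝ) (A : ℝ) (Λ : Set (Euc N))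
    (x : Euc N) (u v : ℝ) : ℝ := pdV (HpenV QS η A Λ x) u v

/-- `‖(u,v)‖²_ε`. -/
def normSqE {N : ℕ} (s : ℝ) (P : PotSetup N) (ε : ℝ) (u v : Euc N → ℝ) : ℝ :=
  gagSq N s u + gagSq N s v + ∫ x, (P.V (ε • x) * u x ^ 2 + P.W (ε • x) * v x ^ 2)

/-- Membership in the space `X_ε`. -/
def MemXe {N : ℕ} (s : ℝ) (P : PotSetup N) (ε : ℝ) (u v : Euc N → ℝ) : Prop :=
  MemHs N s u ∧ MemHs N s v ∧
    Integrable (fun x => P.V (ε • x) * u x ^ 2 + P.W (ε • x) * v x ^ 2)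

/-- The penalized energy functional `J_ε`. -/
def Je {N : ℕ} (s : ℝ) {p : ℝ} (QS : QSetup p) (η : ℝ → ℝ) (A : ℝ) (P : PotSetup N)
    (ε : ℝ) (u v : Euc N → ℝ) : ℝ :=
  (1 / 2) * normSqE s P ε u v - ∫ x, Hpen QS η A P.Λ (ε • x) (u x) (v x)

/-- The pairing `⟨J'_ε(u,v),(φ,ψ)⟩`. -/
def pairJe {N : ℕ} (s : ℝ) {p : ℝ} (QS : QSetup p) (η : ℝ → ℝ) (A : ℝ) (P : PotSetup N)
    (ε : ℝ) (u v φ ψ : Euc N → ℝ) : ℝ :=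
  (∫ z : Euc N × Euc N, (u z.1 - u z.2) * (φ z.1 - φ z.2) / ‖z.1 - z.2‖ ^ ((N : ℝ) + 2 * s)) +
  (∫ z : Euc N × Euc N, (v z.1 - v z.2) * (ψ z.1 - ψ z.2) / ‖z.1 - z.2‖ ^ ((N : ℝ) + 2 * s)) +
  (∫ x, (P.V (ε • x) * u x * φ x + P.W (ε • x) * v x * ψ x)) -
  (∫ x, (φ x * HpenU QS η A P.Λ (ε • x) (u x) (v x) +
         ψ x * HpenV QS η A P.Λ (ε • x) (u x) (v x)))

/-- The Nehari manifold `N_ε` of the penalized functional `J_ε`. -/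
def NehariE {N : ℕ} (s : ℝ) {p : ℝ} (QS : QSetup p) (η : ℝ → ℝ) (A : ℝ) (P : PotSetup N)
    (ε : ℝ) : Set ((Euc N → ℝ) × (Euc N → ℝ)) :=
  {w | MemXe s P ε w.1 w.2 ∧ w ≠ (0, 0) ∧
    normSqE s P ε w.1 w.2 =
      ∫ x, (w.1 x * HpenU QS η A P.Λ (ε • x) (w.1 x) (w.2 x) +
            w.2 x * HpenV QS η A P.Λ (ε • x) (w.1 x) (w.2 x))}

end


/-! The quantity `u H_u + v H_v` is the derivative of `t ↦ H(tu, tv)` at `t = 1`. On `Λ`,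
`H = Q` is `p`-homogeneous, which gives Euler's identity. Off `Λ`, writing `r = √(u² + v²)`,
along the ray `Q̂(tu, tv) = η(tr) tᵖ Q(u,v) + (1 - η(tr)) A t² r²`, so
`u Q̂_u + v Q̂_v - 2 Q̂ = η'(r) r (Q(u,v) - A r²) + (p - 2) η(r) Q(u,v)`.
Both terms are nonnegative: `η' ≤ 0` vanishes outside `[a, 5a]`, and on that annulus
`Q ≤ A r²` by the choice of `A`. -/

open Topology

theorem hasDerivAt_along_ray {F : ℝ → ℝ → ℝ} {u v : ℝ}
    (hF : DifferentiableAt ℝ (fun z : ℝ × ℝ => F z.1 z.2) (u, v)) :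
    HasDerivAt (fun t => F (t * u) (t * v)) (u * pdU F u v + v * pdV F u v) 1 := by
  set D := fderiv ℝ (fun z : ℝ × ℝ => F z.1 z.2) (u, v)
  have hD : HasFDerivAt (fun z : ℝ × ℝ => F z.1 z.2) D (u, v) := hF.hasFDerivAt
  have hU : HasDerivAt (fun t => F t v) (D (1, 0)) u := by
    exact hD.comp_hasDerivAt u ((hasDerivAt_id' u).prodMk (hasDerivAt_const u v))
  have hV : HasDerivAt (fun t => F u t) (D (0, 1)) v := by
    exact hD.comp_hasDerivAt v ((hasDerivAt_const v u).prodMk (hasDerivAt_id' v))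
  have hray : HasDerivAt (fun t : ℝ => (t * u, t * v)) (u, v) 1 := by
    simpa using ((hasDerivAt_id (1 : ℝ)).mul_const u).prodMk
      ((hasDerivAt_id (1 : ℝ)).mul_const v)
  have hlin : D (u, v) = u * D (1, 0) + v * D (0, 1) := by
    have : ((u, v) : ℝ × ℝ) = u • ((1 : ℝ), (0 : ℝ)) + v • ((0 : ℝ), (1 : ℝ)) := by simp
    rw [this, map_add, map_smul, map_smul, smul_eq_mul, smul_eq_mul]
  rw [pdU, pdV, hU.deriv, hV.deriv, ← hlin]
  have hD1 : HasFDerivAt (fun z : ℝ × ℝ => F z.1 z.2) D ((fun t : ℝ => (t * u, t * v)) 1) := by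
    simpa using hD
  exact hD1.comp_hasDerivAt 1 hray

theorem mul_pdU_congr {f g : ℝ → ℝ → ℝ} {u v : ℝ}
    (h : u ≠ 0 → ∀ᶠ t in 𝓝 u, f t v = g t v) : u * pdU f u v = u * pdU g u v := by
  rcases eq_or_ne u 0 with rfl | hu
  · simp
  · rw [pdU, pdU, Filter.EventuallyEq.deriv_eq (h hu)]

theorem mul_pdV_congr {f g : ℝ → ℝ → ℝ} {u v : ℝ}
    (h : v ≠ 0 → ∀ᶠ t in 𝓝 v, f u t = g u t) : v * pdV f u v = v * pdV g u v :=
  mul_pdU_congr (f := flip f) (g := flip g) h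

noncomputable def penalize (η : ℝ → ℝ) (A : ℝ) (q : ℝ → ℝ → ℝ) (u v : ℝ) : ℝ :=
  η (Real.sqrt (u ^ 2 + v ^ 2)) * q u v +
    (1 - η (Real.sqrt (u ^ 2 + v ^ 2))) * (A * (u ^ 2 + v ^ 2))

theorem penalize_euler {η : ℝ → ℝ} {A p : ℝ} {q : ℝ → ℝ → ℝ} {u v r : ℝ}
    (hr : Real.sqrt (u ^ 2 + v ^ 2) = r) (hr0 : 0 < r) (hη : DifferentiableAt ℝ η r)
    (hq : DifferentiableAt ℝ (fun z : ℝ × ℝ => q z.1 z.2) (u, v))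
    (hhom : ∀ᶠ t in 𝓝 1, q (t * u) (t * v) = t ^ p * q u v) :
    u * pdU (penalize η A q) u v + v * pdV (penalize η A q) u v =
      deriv η r * r * (q u v - A * r ^ 2) + η r * (p * q u v) +
        2 * ((1 - η r) * (A * r ^ 2)) := by
  have hsq : u ^ 2 + v ^ 2 = r ^ 2 := by rw [← hr, Real.sq_sqrt (by positivity)]
  have hdiff : DifferentiableAt ℝ (fun z : ℝ × ℝ => penalize η A q z.1 z.2) (u, v) := by
    have hs : DifferentiableAt ℝ (fun z : ℝ × ℝ => Real.sqrt (z.1 ^ 2 + z.2 ^ 2)) (u, v) :=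
      DifferentiableAt.sqrt (by fun_prop) (by rw [hsq]; positivity)
    have hηs :
        DifferentiableAt ℝ (fun z : ℝ × ℝ => η (Real.sqrt (z.1 ^ 2 + z.2 ^ 2))) (u, v) :=
      (show DifferentiableAt ℝ η (Real.sqrt (u ^ 2 + v ^ 2)) by rwa [hr]).comp (u, v) hs
    exact (hηs.mul hq).add ((hηs.const_sub 1).mul (by fun_prop))
  have hray :
      (fun t => η (t * r) * (t ^ p * q u v) + (1 - η (t * r)) * (A * (t ^ 2 * r ^ 2)))
        =ᶠ[𝓝 1] fun t => penalize η A q (t * u) (t * v) := by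
    filter_upwards [Ioi_mem_nhds one_pos, hhom] with t ht hqt
    have hsq_t : (t * u) ^ 2 + (t * v) ^ 2 = t ^ 2 * r ^ 2 := by rw [← hsq]; ring
    have hs_t : Real.sqrt ((t * u) ^ 2 + (t * v) ^ 2) = t * r := by
      rw [hsq_t, ← mul_pow, Real.sqrt_sq (mul_pos ht hr0).le]
    simp only [penalize]
    rw [hs_t, hqt, hsq_t]
  have hηt : HasDerivAt (fun t => η (t * r)) (deriv η r * r) 1 := by
    have h := hη.hasDerivAt.comp_of_eq (1 : ℝ) ((hasDerivAt_id' (1 : ℝ)).mul_const r)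
      (one_mul r).symm
    rwa [one_mul] at h
  have hpow : HasDerivAt (fun t : ℝ => t ^ p) p 1 := by
    simpa using Real.hasDerivAt_rpow_const (x := (1 : ℝ)) (p := p) (Or.inl one_ne_zero)
  have hsqd : HasDerivAt (fun t : ℝ => t ^ 2) 2 1 := by simpa using hasDerivAt_pow 2 (1 : ℝ)
  have hg := (hηt.mul (hpow.mul_const (q u v))).add
    ((hηt.const_sub 1).mul ((hsqd.mul_const (r ^ 2)).const_mul A))
  refine (hasDerivAt_along_ray hdiff).unique
    ((hg.congr_of_eventuallyEq hray.symm).congr_deriv ?_)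
  simp only [Real.one_rpow, one_pow, one_mul]
  ring

theorem EtaSetup.deriv_mul_nonneg {a cη : ℝ} (E : EtaSetup a cη) {r c : ℝ}
    (hc : a ≤ r → r ≤ 5 * a → c ≤ 0) : 0 ≤ deriv E.η r * c := by
  by_cases hlo : r < a
  · have : E.η =ᶠ[𝓝 r] fun _ => 1 := by
      filter_upwards [Iio_mem_nhds hlo] with t ht using E.eq_one t ht.le
    simp [this.deriv_eq]
  by_cases hhi : 5 * a < r
  · have : E.η =ᶠ[𝓝 r] fun _ => 0 := by
      filter_upwards [Ioi_mem_nhds hhi] with t ht using E.eq_zero t ht.le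
    simp [this.deriv_eq]
  exact mul_nonneg_of_nonpos_of_nonpos E.anti.deriv_nonpos (hc (not_lt.1 hlo) (not_lt.1 hhi))


namespace QSetup

variable {p : ℝ} (QS : QSetup p)

theorem eq_zero_of_not_pos {u v : ℝ} (h : ¬(0 < u ∧ 0 < v)) : QS.Q u v = 0 :=
  QS.ext_zero u v (by contrapose! h; exact h)

theorem nonneg (u v : ℝ) : 0 ≤ QS.Q u v := by
  by_cases h : 0 < u ∧ 0 < v
  · exact (QS.q5 u v h.1 h.2).le
  · rw [QS.eq_zero_of_not_pos h]

theorem eventually_eq_zero_left {u v : ℝ} (hu : u ≠ 0) (h : ¬(0 < u ∧ 0 < v)) :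
    ∀ᶠ t in 𝓝 u, QS.Q t v = 0 := by
  by_cases hv : 0 < v
  · filter_upwards [Iio_mem_nhds (lt_of_le_of_ne (not_lt.1 fun hu' => h ⟨hu', hv⟩) hu)]
      with t ht using QS.ext_zero t v (Or.inl ht.le)
  · exact Filter.Eventually.of_forall fun t => QS.ext_zero t v (Or.inr (not_lt.1 hv))

theorem eventually_eq_zero_right {u v : ℝ} (hv : v ≠ 0) (h : ¬(0 < u ∧ 0 < v)) :
    ∀ᶠ t in 𝓝 v, QS.Q u t = 0 := by
  by_cases hu : 0 < u
  · filter_upwards [Iio_mem_nhds (lt_of_le_of_ne (not_lt.1 fun hv' => h ⟨hu, hv'⟩) hv)]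
      with t ht using QS.ext_zero u t (Or.inr ht.le)
  · exact Filter.Eventually.of_forall fun t => QS.ext_zero u t (Or.inl (not_lt.1 hu))

theorem differentiableAt {u v : ℝ} (hu : 0 < u) (hv : 0 < v) :
    DifferentiableAt ℝ (fun z : ℝ × ℝ => QS.Q z.1 z.2) (u, v) := by
  have hmem : Ici (0 : ℝ) ×ˢ Ici (0 : ℝ) ∈ 𝓝 ((u, v) : ℝ × ℝ) :=
    Filter.mem_of_superset ((isOpen_Ioi.prod isOpen_Ioi).mem_nhds ⟨hu, hv⟩)
      (Set.prod_mono Ioi_subset_Ici_self Ioi_subset_Ici_self)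
  exact (QS.smooth.contDiffAt hmem).differentiableAt (by norm_num)

theorem eventually_homogeneous {u v : ℝ} (hu : 0 ≤ u) (hv : 0 ≤ v) :
    ∀ᶠ t in 𝓝 1, QS.Q (t * u) (t * v) = t ^ p * QS.Q u v := by
  filter_upwards [Ioi_mem_nhds one_pos] with t ht using QS.q1 t ht u v hu hv

theorem euler (u v : ℝ) : u * pdU QS.Q u v + v * pdV QS.Q u v = p * QS.Q u v := by
  by_cases h : 0 < u ∧ 0 < v
  · have hpow : HasDerivAt (fun t : ℝ => t ^ p * QS.Q u v) (p * QS.Q u v) 1 := by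
      simpa using (Real.hasDerivAt_rpow_const (Or.inl one_ne_zero)).mul_const (QS.Q u v)
    exact (hasDerivAt_along_ray (QS.differentiableAt h.1 h.2)).unique
      (hpow.congr_of_eventuallyEq (QS.eventually_homogeneous h.1.le h.2.le))
  · rw [mul_pdU_congr (g := fun _ _ => 0) fun hu => QS.eventually_eq_zero_left hu h,
      mul_pdV_congr (g := fun _ _ => 0) fun hv => QS.eventually_eq_zero_right hv h,
      QS.eq_zero_of_not_pos h]
    simp [pdU, pdV]

theorem exists_le_of_abs_le (R : ℝ) :
    ∃ M, ∀ u v, |u| ≤ R → |v| ≤ R → QS.Q u v ≤ M := by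
  obtain ⟨M, hM⟩ := (isCompact_Icc.prod isCompact_Icc).bddAbove_image
    (QS.smooth.continuousOn.mono
      (Set.prod_mono (Icc_subset_Ici_self : Icc (0 : ℝ) R ⊆ Ici 0) Icc_subset_Ici_self))
  refine ⟨max M 0, fun u v hu hv => ?_⟩
  by_cases h : 0 < u ∧ 0 < v
  · refine le_max_of_le_left (hM ⟨(u, v), ⟨⟨h.1.le, ?_⟩, ⟨h.2.le, ?_⟩⟩, rfl⟩)
    · exact (le_abs_self u).trans hu
    · exact (le_abs_self v).trans hv
  · rw [QS.eq_zero_of_not_pos h]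
    exact le_max_right M 0

theorem le_Aconst_mul {a : ℝ} (ha : 0 < a) {u v : ℝ} (h1 : a ≤ Real.sqrt (u ^ 2 + v ^ 2))
    (h2 : Real.sqrt (u ^ 2 + v ^ 2) ≤ 5 * a) : QS.Q u v ≤ Aconst QS a * (u ^ 2 + v ^ 2) := by
  obtain ⟨M, hM⟩ := QS.exists_le_of_abs_le (5 * a)
  have hM0 : 0 ≤ M := (QS.nonneg 0 0).trans (hM 0 0 (by rw [abs_zero]; positivity)
    (by rw [abs_zero]; positivity))
  have hbdd : BddAbove ((fun z : ℝ × ℝ => QS.Q z.1 z.2 / (z.1 ^ 2 + z.2 ^ 2)) ''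
      {z : ℝ × ℝ | a ≤ Real.sqrt (z.1 ^ 2 + z.2 ^ 2) ∧
        Real.sqrt (z.1 ^ 2 + z.2 ^ 2) ≤ 5 * a}) := by
    refine ⟨M / a ^ 2, ?_⟩
    rintro _ ⟨z, ⟨hz1, hz2⟩, rfl⟩
    have hQ : QS.Q z.1 z.2 ≤ M :=
      hM _ _ ((Real.abs_le_sqrt (by nlinarith)).trans hz2)
        ((Real.abs_le_sqrt (by nlinarith)).trans hz2)
    exact div_le_div₀ hM0 hQ (by positivity) ((Real.le_sqrt ha.le (by positivity)).1 hz1)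
  have hle := le_csSup hbdd ⟨(u, v), ⟨h1, h2⟩, rfl⟩
  rwa [div_le_iff₀ (by nlinarith [(Real.le_sqrt ha.le (by positivity)).1 h1])] at hle

theorem two_mul_Qhat_le (hp : 2 ≤ p) {a cη : ℝ} (ha : 0 < a) (E : EtaSetup a cη) (u v : ℝ) :
    2 * Qhat QS E.η (Aconst QS a) u v ≤
      u * pdU (Qhat QS E.η (Aconst QS a)) u v + v * pdV (Qhat QS E.η (Aconst QS a)) u v := by
  set A := Aconst QS a
  by_cases h0 : u = 0 ∧ v = 0
  · obtain ⟨rfl, rfl⟩ := h0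
    simp [Qhat, QS.ext_zero 0 0 (Or.inl le_rfl)]
  set r := Real.sqrt (u ^ 2 + v ^ 2) with hr
  have hr0 : 0 < r := Real.sqrt_pos.2 (by rcases not_and_or.1 h0 with h | h <;> positivity)
  have hsq : u ^ 2 + v ^ 2 = r ^ 2 := by rw [hr, Real.sq_sqrt (by positivity)]
  have hηr : DifferentiableAt ℝ E.η r := E.smooth.differentiable (by norm_num) r
  have heuler : u * pdU (Qhat QS E.η A) u v + v * pdV (Qhat QS E.η A) u v =
      deriv E.η r * r * (QS.Q u v - A * r ^ 2) + E.η r * (p * QS.Q u v) +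
        2 * ((1 - E.η r) * (A * r ^ 2)) := by
    by_cases hpos : 0 < u ∧ 0 < v
    · exact penalize_euler hr.symm hr0 hηr (QS.differentiableAt hpos.1 hpos.2)
        (QS.eventually_homogeneous hpos.1.le hpos.2.le)
    -- off the open quadrant `Q̂` agrees near `(u, v)` with the penalization of `0`
    have hzero := penalize_euler (A := A) (p := p) (q := fun _ _ => 0) hr.symm hr0 hηr
      (differentiableAt_const _) (by simp)
    have hU : u * pdU (Qhat QS E.η A) u v = u * pdU (penalize E.η A fun _ _ => 0) u v :=
      mul_pdU_congr fun hu => (QS.eventually_eq_zero_left hu hpos).mono fun t ht => by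
        simp only [Qhat, penalize, ht]
    have hV : v * pdV (Qhat QS E.η A) u v = v * pdV (penalize E.η A fun _ _ => 0) u v :=
      mul_pdV_congr fun hv => (QS.eventually_eq_zero_right hv hpos).mono fun t ht => by
        simp only [Qhat, penalize, ht]
    rw [hU, hV, hzero, QS.eq_zero_of_not_pos hpos]
  have hQhat : Qhat QS E.η A u v = E.η r * QS.Q u v + (1 - E.η r) * (A * r ^ 2) := by
    rw [Qhat, ← hr, hsq]
  have hcut : 0 ≤ deriv E.η r * r * (QS.Q u v - A * r ^ 2) := by
    rw [mul_right_comm]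
    refine mul_nonneg (E.deriv_mul_nonneg fun h1 h2 => ?_) hr0.le
    linarith [hsq ▸ QS.le_Aconst_mul ha h1 h2]
  have hhom : 0 ≤ (p - 2) * (E.η r * QS.Q u v) :=
    mul_nonneg (by linarith) (mul_nonneg (E.mem01 r).1 (QS.nonneg u v))
  rw [heuler, hQhat]
  linarith

end QSetup

theorem Hpen_of_mem {N : ℕ} {p : ℝ} (QS : QSetup p) (η : ℝ → ℝ) (A : ℝ)
    {Λ : Set (Euc N)} {x : Euc N} (hx : x ∈ Λ) : Hpen QS η A Λ x = QS.Q := by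
  funext u v
  simp [Hpen, hx]

theorem Hpen_of_notMem {N : ℕ} {p : ℝ} (QS : QSetup p) (η : ℝ → ℝ) (A : ℝ)
    {Λ : Set (Euc N)} {x : Euc N} (hx : x ∉ Λ) : Hpen QS η A Λ x = Qhat QS η A := by
  funext u v
  simp [Hpen, hx]

theorem stmt2_general {N : ℕ} (s p : ℝ)
    (hp : 2 < p ∧ p < 2 * (N : ℝ) / ((N : ℝ) - 2 * s))
    (QS : QSetup p) (Λ : Set (Euc N))
    (cη : ℝ) :
    ∀ a : ℝ, 0 < a → ∀ E : EtaSetup a cη, ∀ u v : ℝ,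
      (∀ x ∈ Λ,
        p * Hpen QS E.η (Aconst QS a) Λ x u v =
          u * HpenU QS E.η (Aconst QS a) Λ x u v +
          v * HpenV QS E.η (Aconst QS a) Λ x u v) ∧
      (∀ x ∉ Λ,
        2 * Hpen QS E.η (Aconst QS a) Λ x u v ≤
          u * HpenU QS E.η (Aconst QS a) Λ x u v +
          v * HpenV QS E.η (Aconst QS a) Λ x u v) := by
  intro a ha E u v
  refine ⟨fun x hx => ?_, fun x hx => ?_⟩
  · simp only [HpenU, HpenV, Hpen_of_mem QS _ _ hx]
    exact (QS.euler u v).symm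
  · simp only [HpenU, HpenV, Hpen_of_notMem QS _ _ hx]
    exact QS.two_mul_Qhat_le hp.1.le ha E u v

/-- for every `a > 0` and `(u,v) ∈ ℝ²`,
`p H(x,u,v) = u H_u(x,u,v) + v H_v(x,u,v)` on `Λ` and
`2 H(x,u,v) ≤ u H_u(x,u,v) + v H_v(x,u,v)` on `ℝ^N \ Λ`. -/
theorem stmt2 {N : ℕ} (s p : ℝ) (hs : 0 < s ∧ s < 1) (hN : 2 * s < (N : ℝ))
    (hp : 2 < p ∧ p < 2 * (N : ℝ) / ((N : ℝ) - 2 * s))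
    (QS : QSetup p) (Λ : Set (Euc N)) (hΛo : IsOpen Λ) (hΛb : Bornology.IsBounded Λ)
    (cη : ℝ) (hcη : 0 < cη) :
    ∀ a : ℝ, 0 < a → ∀ E : EtaSetup a cη, ∀ u v : ℝ,
      (∀ x ∈ Λ,
        p * Hpen QS E.η (Aconst QS a) Λ x u v =
          u * HpenU QS E.η (Aconst QS a) Λ x u v +
          v * HpenV QS E.η (Aconst QS a) Λ x u v) ∧
      (∀ x ∉ Λ,
        2 * Hpen QS E.η (Aconst QS a) Λ x u v ≤
          u * HpenU QS E.η (Aconst QS a) Λ x u v +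
          v * HpenV QS E.η (Aconst QS a) Λ x u v) :=
  stmt2_general s p hp QS Λ cη
end

section
/- There exists C > 0, depending only on N, s and c, such that for every R > 0, every θ ∈ (0,1), every u ∈ L²(ℝ^N), and every η_R : ℝ^N → [0,1] with η_R = 0 on B_R, η_R = 1 on ℝ^N ∖ B_{2R}, and |η_R(x) − η_R(y)| ≤ (c/R)|x − y| for all x, y: ∬_{B_{2R}×ℝ^N} u(x)² |η_R(x) − η_R(y)|² / |x−y|^{N+2s} dx dy ≤ C R^{−2s} ∫_{B_{2R}∖B_{θR}} u² dx + C ((1−θ)R)^{−2s} ∫_{B_{θR}} u² dx. -/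
open MeasureTheory Real Set Filter

/-!
By Tonelli the double integral equals `∫_{B_{2R}} u(x)² I(x) dx` with
`I(x) = ∫ |η(x) - η(y)|² |x - y|^{-N-2s} dy`. Bounding `|η(x) - η(y)|` by `(c/R)|x - y|` when
`|x - y| < R` and by `1` otherwise, and evaluating the two radial integrals in polar coordinates,
gives `I(x) ≤ C R^{-2s}` for every `x`. For `x ∈ B_{θR}` the function `η` vanishes on
`B(x, (1-θ)R) ⊆ B_R`, so only the tail `|x - y| ≥ (1-θ)R` contributes and
`I(x) ≤ C ((1-θ)R)^{-2s}`. Splitting `B_{2R}` into `B_{θR}` and the annulus gives the estimate.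
-/

open Metric Module
open scoped ENNReal

section Kernel

variable {E : Type*} [NormedAddCommGroup E] [MeasurableSpace E] [BorelSpace E] (μ : Measure E)
  [μ.IsAddLeftInvariant] [μ.IsNegInvariant]

theorem lintegral_sq_sub_div_rpow_le {η : E → ℝ} {x : E} {q L ρ : ℝ}
    (hnear : ∀ y, ‖x - y‖ < ρ → |η x - η y| ≤ L * ‖x - y‖) (hfar : ∀ y, |η x - η y| ≤ 1) :
    ∫⁻ y, ENNReal.ofReal ((η x - η y) ^ 2 / ‖x - y‖ ^ q) ∂μ ≤
      ENNReal.ofReal (L ^ 2) * ∫⁻ z in ball 0 ρ, ENNReal.ofReal (‖z‖ ^ (2 - q)) ∂μ +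
        ∫⁻ z in (ball 0 ρ)ᶜ, ENNReal.ofReal (‖z‖ ^ (-q)) ∂μ := by
  classical
  set G : E → ℝ≥0∞ := (ball 0 ρ).piecewise (fun z => ENNReal.ofReal (L ^ 2 * ‖z‖ ^ (2 - q)))
    (fun z => ENNReal.ofReal (‖z‖ ^ (-q)))
  have hpoint : ∀ y, ENNReal.ofReal ((η x - η y) ^ 2 / ‖x - y‖ ^ q) ≤ G (x - y) := by
    intro y
    by_cases hy : ‖x - y‖ < ρ
    · have hmem : x - y ∈ ball (0 : E) ρ := mem_ball_zero_iff.2 hy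
      simp only [G, piecewise_eq_of_mem _ _ _ hmem]
      refine ENNReal.ofReal_le_ofReal ?_
      have hsq : (η x - η y) ^ 2 ≤ L ^ 2 * ‖x - y‖ ^ 2 := by
        rw [← sq_abs, ← mul_pow]
        exact pow_le_pow_left₀ (abs_nonneg _) (hnear y hy) 2
      calc (η x - η y) ^ 2 / ‖x - y‖ ^ q ≤ L ^ 2 * (‖x - y‖ ^ 2 / ‖x - y‖ ^ q) := by
            rw [← mul_div_assoc]; gcongr
        _ ≤ L ^ 2 * ‖x - y‖ ^ (2 - q) := by
            gcongr
            rcases (norm_nonneg (x - y)).eq_or_lt with h0 | hpos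
            · rw [← h0, zero_pow two_ne_zero, zero_div]; positivity
            · rw [rpow_sub hpos, rpow_two]
    · have hmem : x - y ∉ ball (0 : E) ρ := fun h => hy (mem_ball_zero_iff.1 h)
      simp only [G, piecewise_eq_of_notMem _ _ _ hmem]
      refine ENNReal.ofReal_le_ofReal ?_
      rw [rpow_neg (norm_nonneg _), inv_eq_one_div]
      gcongr
      exact sq_le_one_iff_abs_le_one _ |>.2 (hfar y)
  calc ∫⁻ y, ENNReal.ofReal ((η x - η y) ^ 2 / ‖x - y‖ ^ q) ∂μ
      ≤ ∫⁻ y, G (x - y) ∂μ := lintegral_mono hpoint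
    _ = ∫⁻ z, G z ∂μ := lintegral_sub_left_eq_self G x
    _ = _ := by
      rw [lintegral_piecewise measurableSet_ball, ← lintegral_const_mul' _ _ ENNReal.ofReal_ne_top]
      simp_rw [ENNReal.ofReal_mul (sq_nonneg L)]

end Kernel

section Radial

variable {E : Type*} [NormedAddCommGroup E] [NormedSpace ℝ E] [Nontrivial E]
  [FiniteDimensional ℝ E] [MeasurableSpace E] [BorelSpace E] (μ : Measure E) [μ.IsAddHaarMeasure]

theorem lintegral_ofReal_fun_norm {f : ℝ → ℝ} (hf : 0 ≤ f)
    (hint : IntegrableOn (fun y => y ^ (finrank ℝ E - 1) * f y) (Ioi 0)) :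
    ∫⁻ x, ENNReal.ofReal (f ‖x‖) ∂μ = ENNReal.ofReal
      (finrank ℝ E * μ.real (ball 0 1) * ∫ y in Ioi 0, y ^ (finrank ℝ E - 1) * f y) := by
  rw [← ofReal_integral_eq_lintegral_ofReal ((integrable_fun_norm_addHaar μ).2 hint)
    (.of_forall fun x => hf _), integral_fun_norm_addHaar]
  simp only [nsmul_eq_mul, smul_eq_mul, mul_assoc]

theorem setLIntegral_norm_preimage_rpow {S : Set ℝ} (hS : MeasurableSet S) {p : ℝ}
    (hint : IntegrableOn (fun y => y ^ ((finrank ℝ E : ℝ) - 1 + p)) (Ioi 0 ∩ S)) :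
    ∫⁻ x in (‖·‖) ⁻¹' S, ENNReal.ofReal (‖x‖ ^ p) ∂μ = ENNReal.ofReal
      (finrank ℝ E * μ.real (ball 0 1) * ∫ y in Ioi 0 ∩ S, y ^ ((finrank ℝ E : ℝ) - 1 + p)) := by
  -- `|y| ^ p` rather than `y ^ p`: `Real.rpow` can be negative at a negative base.
  set f : ℝ → ℝ := S.indicator fun y => |y| ^ p
  have hradial : EqOn (fun y => y ^ (finrank ℝ E - 1) * f y)
      (S.indicator fun y => y ^ ((finrank ℝ E : ℝ) - 1 + p)) (Ioi 0) := by
    intro y (hy : 0 < y)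
    by_cases hyS : y ∈ S
    · simp [f, hyS, abs_of_pos hy, rpow_add hy, ← rpow_natCast,
        Nat.cast_sub finrank_pos]
    · simp [f, hyS]
  have hint' : IntegrableOn (fun y => y ^ (finrank ℝ E - 1) * f y) (Ioi 0) := by
    refine IntegrableOn.congr_fun ?_ hradial.symm measurableSet_Ioi
    rw [IntegrableOn, integrable_indicator_iff hS, IntegrableOn, Measure.restrict_restrict hS,
      inter_comm]
    exact hint
  have hf : 0 ≤ f := indicator_nonneg fun y _ => by positivity
  calc ∫⁻ x in (‖·‖) ⁻¹' S, ENNReal.ofReal (‖x‖ ^ p) ∂μ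
      = ∫⁻ x, ENNReal.ofReal (f ‖x‖) ∂μ := by
        rw [← lintegral_indicator (hS.preimage measurable_norm)]
        congr 1 with x
        by_cases hx : ‖x‖ ∈ S <;> simp [f, hx]
    _ = _ := by
        rw [lintegral_ofReal_fun_norm μ hf hint', setIntegral_congr_fun measurableSet_Ioi hradial,
          setIntegral_indicator hS]

theorem setLIntegral_ball_rpow {p r : ℝ} (hp : -(finrank ℝ E : ℝ) < p) (hr : 0 < r) :
    ∫⁻ x in ball (0 : E) r, ENNReal.ofReal (‖x‖ ^ p) ∂μ = ENNReal.ofReal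
      (finrank ℝ E * μ.real (ball 0 1) / (finrank ℝ E + p) * r ^ ((finrank ℝ E : ℝ) + p)) := by
  have hball : ball (0 : E) r = (‖·‖) ⁻¹' Iio r := by ext; simp
  have hIoo : Ioi 0 ∩ Iio r = Ioo 0 r := Ioi_inter_Iio
  have hexp : -1 < (finrank ℝ E : ℝ) - 1 + p := by linarith
  have hint : IntegrableOn (fun y => y ^ ((finrank ℝ E : ℝ) - 1 + p)) (Ioo 0 r) :=
    (intervalIntegral.intervalIntegrable_rpow' hexp).1.mono_set Ioo_subset_Ioc_self
  rw [hball, setLIntegral_norm_preimage_rpow μ measurableSet_Iio (by rwa [hIoo]), hIoo,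
    ← integral_Ioc_eq_integral_Ioo, ← intervalIntegral.integral_of_le hr.le,
    integral_rpow (.inl hexp), zero_rpow (by linarith), sub_zero,
    show (finrank ℝ E : ℝ) - 1 + p + 1 = finrank ℝ E + p by ring]
  congr 1
  ring

theorem setLIntegral_compl_ball_rpow_neg {q r : ℝ} (hq : (finrank ℝ E : ℝ) < q) (hr : 0 < r) :
    ∫⁻ x in (ball (0 : E) r)ᶜ, ENNReal.ofReal (‖x‖ ^ (-q)) ∂μ = ENNReal.ofReal
      (finrank ℝ E * μ.real (ball 0 1) / (q - finrank ℝ E) * r ^ ((finrank ℝ E : ℝ) - q)) := by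
  have hball : (ball (0 : E) r)ᶜ = (‖·‖) ⁻¹' Ici r := by ext; simp
  have hIci : Ioi 0 ∩ Ici r = Ici r := inter_eq_right.2 (Ici_subset_Ioi.2 hr)
  have hexp : (finrank ℝ E : ℝ) - 1 + -q < -1 := by linarith
  have hint : IntegrableOn (fun y => y ^ ((finrank ℝ E : ℝ) - 1 + -q)) (Ici r) :=
    (integrableOn_Ici_iff_integrableOn_Ioi).2 (integrableOn_Ioi_rpow_of_lt hexp hr)
  rw [hball, setLIntegral_norm_preimage_rpow μ measurableSet_Ici (by rwa [hIci]), hIci,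
    integral_Ici_eq_integral_Ioi, integral_Ioi_rpow_of_lt hexp hr]
  congr 1
  rw [show (finrank ℝ E : ℝ) - 1 + -q + 1 = finrank ℝ E - q by ring, neg_div, ← div_neg,
    neg_sub]
  ring

theorem lintegral_sq_sub_div_rpow_finrank_add_le {η : E → ℝ} {x : E} {s L ρ : ℝ} (hs0 : 0 < s)
    (hs1 : s < 1) (hρ : 0 < ρ) (hnear : ∀ y, ‖x - y‖ < ρ → |η x - η y| ≤ L * ‖x - y‖)
    (hfar : ∀ y, |η x - η y| ≤ 1) :
    ∫⁻ y, ENNReal.ofReal ((η x - η y) ^ 2 / ‖x - y‖ ^ ((finrank ℝ E : ℝ) + 2 * s)) ∂μ ≤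
      ENNReal.ofReal (finrank ℝ E * μ.real (ball 0 1) * ((L * ρ) ^ 2 / (2 - 2 * s) + 1 / (2 * s)) *
        ρ ^ (-(2 * s))) := by
  calc _ ≤ _ := lintegral_sq_sub_div_rpow_le μ hnear hfar
    _ = _ := by
      rw [setLIntegral_ball_rpow μ (by linarith) hρ,
        setLIntegral_compl_ball_rpow_neg μ (by linarith) hρ,
        show (finrank ℝ E : ℝ) + (2 - (finrank ℝ E + 2 * s)) = 2 - 2 * s by ring,
        show (finrank ℝ E : ℝ) - (finrank ℝ E + 2 * s) = -(2 * s) by ring,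
        show (finrank ℝ E : ℝ) + 2 * s - finrank ℝ E = 2 * s by ring,
        ← ENNReal.ofReal_mul (sq_nonneg L), ← ENNReal.ofReal_add
          (mul_nonneg (sq_nonneg L) (mul_nonneg (div_nonneg (by positivity) (by linarith))
            (rpow_nonneg hρ.le _)))
          (by positivity)]
      congr 1
      rw [sub_eq_add_neg 2, rpow_add hρ, rpow_two]
      ring

theorem lintegral_sq_sub_div_rpow_finrank_add_le_of_eqOn_ball {η : E → ℝ} {x : E} {s ρ : ℝ}
    (hs0 : 0 < s) (hs1 : s < 1) (hρ : 0 < ρ) (hη0 : ∀ y ∈ ball x ρ, η y = 0)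
    (hfar : ∀ y, |η x - η y| ≤ 1) :
    ∫⁻ y, ENNReal.ofReal ((η x - η y) ^ 2 / ‖x - y‖ ^ ((finrank ℝ E : ℝ) + 2 * s)) ∂μ ≤
      ENNReal.ofReal (finrank ℝ E * μ.real (ball 0 1) / (2 * s) * ρ ^ (-(2 * s))) := by
  have hnear : ∀ y, ‖x - y‖ < ρ → |η x - η y| ≤ 0 * ‖x - y‖ := fun y hy => by
    rw [hη0 x (mem_ball_self hρ), hη0 y (mem_ball'.2 (by rwa [dist_eq_norm])), sub_zero,
      abs_zero, zero_mul]
  convert lintegral_sq_sub_div_rpow_finrank_add_le μ hs0 hs1 hρ hnear hfar using 3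
  ring

end Radial

section Product

variable {α β : Type*} [MeasurableSpace α] [MeasurableSpace β] {μ : Measure α} {ν : Measure β}
  [SFinite μ] [SFinite ν]

theorem setLIntegral_prod_univ_sq_mul {f : α → ℝ} {k : α → β → ℝ} (hf : AEMeasurable f μ)
    (hk : Measurable (Function.uncurry k)) (s : Set α) :
    ∫⁻ z in s ×ˢ univ, ENNReal.ofReal (f z.1 ^ 2 * k z.1 z.2) ∂μ.prod ν =
      ∫⁻ x in s, ENNReal.ofReal (f x ^ 2) * ∫⁻ y, ENNReal.ofReal (k x y) ∂ν ∂μ := by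
  rw [← Measure.restrict_prod_eq_prod_univ, lintegral_prod]
  · simp_rw [ENNReal.ofReal_mul (sq_nonneg _), lintegral_const_mul' _ _ ENNReal.ofReal_ne_top]
  · exact ((hf.restrict.comp_fst.pow_const 2).mul hk.aemeasurable).ennreal_ofReal

end Product

theorem setLIntegral_mul_le_add_of_le {α : Type*} [MeasurableSpace α] {μ : Measure α}
    {s t : Set α} (hs : MeasurableSet s) (ht : MeasurableSet t) (hts : t ⊆ s)
    {g I : α → ℝ≥0∞} {a b : ℝ} (ha : ∀ x ∈ s \ t, I x ≤ ENNReal.ofReal a)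
    (hb : ∀ x ∈ t, I x ≤ ENNReal.ofReal b) :
    ∫⁻ x in s, g x * I x ∂μ ≤
      ENNReal.ofReal a * ∫⁻ x in s \ t, g x ∂μ + ENNReal.ofReal b * ∫⁻ x in t, g x ∂μ := by
  rw [← lintegral_inter_add_sdiff _ s ht, inter_eq_right.2 hts, add_comm]
  simp_rw [← lintegral_const_mul' _ _ ENNReal.ofReal_ne_top, mul_comm (ENNReal.ofReal _)]
  exact add_le_add (setLIntegral_mono' (hs.diff ht) fun x hx => by gcongr; exact ha x hx)
    (setLIntegral_mono' ht fun x hx => by gcongr; exact hb x hx)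

theorem stmt11_general {N : ℕ} (s : ℝ) (hs : 0 < s ∧ s < 1) (hN : 2 * s < (N : ℝ))
    (c : ℝ) :
    ∃ C : ℝ, 0 < C ∧ ∀ R θ : ℝ, 0 < R → 0 < θ → θ < 1 →
      ∀ u : Euc N → ℝ, MemLp u 2 (volume : Measure (Euc N)) →
      ∀ ηR : Euc N → ℝ, (∀ x, ηR x ∈ Icc (0 : ℝ) 1) →
        (∀ x ∈ Metric.ball (0 : Euc N) R, ηR x = 0) →
        (∀ x ∉ Metric.ball (0 : Euc N) (2 * R), ηR x = 1) →
        (∀ x y : Euc N, |ηR x - ηR y| ≤ c / R * ‖x - y‖) →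
      (∫⁻ z : Euc N × Euc N in
          Metric.ball (0 : Euc N) (2 * R) ×ˢ (Set.univ : Set (Euc N)),
          ENNReal.ofReal
            ((u z.1) ^ 2 * (ηR z.1 - ηR z.2) ^ 2 / ‖z.1 - z.2‖ ^ ((N : ℝ) + 2 * s))) ≤
        ENNReal.ofReal (C * R ^ (-(2 * s))) *
          (∫⁻ x in Metric.ball (0 : Euc N) (2 * R) \ Metric.ball (0 : Euc N) (θ * R),
            ENNReal.ofReal ((u x) ^ 2)) +
        ENNReal.ofReal (C * ((1 - θ) * R) ^ (-(2 * s))) *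
          (∫⁻ x in Metric.ball (0 : Euc N) (θ * R), ENNReal.ofReal ((u x) ^ 2)) := by
  obtain ⟨hs0, hs1⟩ := hs
  have hdim : finrank ℝ (Euc N) = N := finrank_euclideanSpace_fin
  have hN0 : (0 : ℝ) < N := by linarith
  have : Nontrivial (Euc N) :=
    nontrivial_of_finrank_pos (R := ℝ) (by rw [hdim]; exact_mod_cast hN0)
  have hv : 0 < volume.real (ball (0 : Euc N) 1) :=
    ENNReal.toReal_pos (measure_ball_pos volume 0 one_pos).ne' measure_ball_lt_top.ne
  have hs2 : 0 < 2 - 2 * s := by linarith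
  refine ⟨N * volume.real (ball (0 : Euc N) 1) * (c ^ 2 / (2 - 2 * s) + 1 / (2 * s)),
    by positivity, ?_⟩
  intro R θ hR hθ0 hθ1 u hu η hη01 hη0 _ hηlip
  have hfar : ∀ x y, |η x - η y| ≤ 1 := fun x y =>
    abs_sub_le_of_nonneg_of_le (hη01 x).1 (hη01 x).2 (hη01 y).1 (hη01 y).2
  have hηm : Measurable η := (LipschitzWith.of_dist_le' fun x y => by
    rw [Real.dist_eq, dist_eq_norm]; exact hηlip x y).continuous.measurable
  rw [Measure.volume_eq_prod]
  simp_rw [mul_div_assoc]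
  rw [setLIntegral_prod_univ_sq_mul (k := fun x y => (η x - η y) ^ 2 / ‖x - y‖ ^ ((N : ℝ) + 2 * s))
    hu.aestronglyMeasurable.aemeasurable (by fun_prop)]
  refine setLIntegral_mul_le_add_of_le measurableSet_ball measurableSet_ball
    (ball_subset_ball (by nlinarith)) (fun x _ => ?_) (fun x hx => ?_)
  · simpa only [hdim, div_mul_cancel₀ c hR.ne'] using
      lintegral_sq_sub_div_rpow_finrank_add_le volume hs0 hs1 hR (fun y _ => hηlip x y) (hfar x)
  · have hρ : 0 < (1 - θ) * R := by nlinarith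
    have hsub : ball x ((1 - θ) * R) ⊆ ball 0 R :=
      ball_subset_ball' (by linarith [mem_ball_zero_iff.1 hx, dist_zero_right x])
    refine (hdim ▸ lintegral_sq_sub_div_rpow_finrank_add_le_of_eqOn_ball volume hs0 hs1 hρ
      (fun y hy => hη0 y (hsub hy)) (hfar x)).trans (ENNReal.ofReal_le_ofReal ?_)
    gcongr
    rw [mul_add, mul_one_div]
    exact le_add_of_nonneg_left (by positivity)

/-- estimate for the cut-off Gagliardo energy on `B_{2R} × ℝ^N`. -/
theorem stmt11 {N : ℕ} (s : ℝ) (hs : 0 < s ∧ s < 1) (hN : 2 * s < (N : ℝ))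
    (c : ℝ) (hc : 0 < c) :
    ∃ C : ℝ, 0 < C ∧ ∀ R θ : ℝ, 0 < R → 0 < θ → θ < 1 →
      ∀ u : Euc N → ℝ, MemLp u 2 (volume : Measure (Euc N)) →
      ∀ ηR : Euc N → ℝ, (∀ x, ηR x ∈ Icc (0 : ℝ) 1) →
        (∀ x ∈ Metric.ball (0 : Euc N) R, ηR x = 0) →
        (∀ x ∉ Metric.ball (0 : Euc N) (2 * R), ηR x = 1) →
        (∀ x y : Euc N, |ηR x - ηR y| ≤ c / R * ‖x - y‖) →
      (∫⁻ z : Euc N × Euc N in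
          Metric.ball (0 : Euc N) (2 * R) ×ˢ (Set.univ : Set (Euc N)),
          ENNReal.ofReal
            ((u z.1) ^ 2 * (ηR z.1 - ηR z.2) ^ 2 / ‖z.1 - z.2‖ ^ ((N : ℝ) + 2 * s))) ≤
        ENNReal.ofReal (C * R ^ (-(2 * s))) *
          (∫⁻ x in Metric.ball (0 : Euc N) (2 * R) \ Metric.ball (0 : Euc N) (θ * R),
            ENNReal.ofReal ((u x) ^ 2)) +
        ENNReal.ofReal (C * ((1 - θ) * R) ^ (-(2 * s))) *
          (∫⁻ x in Metric.ball (0 : Euc N) (θ * R), ENNReal.ofReal ((u x) ^ 2)) :=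
  stmt11_general s hs hN c
end
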